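/- arXiv:0804.2908 — 3 statements merged into one kernel-verified Lean document; each statement's English description precedes it below -/
import Mathlib

section
/- Let T be a theory, P and Q countable sets of types, and let K(T|P) denote the class of models of T omitting every type in P. If K(T|P) is nonempty and each q ∈ Q is unsupported over K(T|P), then there exists a countable model in K(T|P) omitting every q ∈ Q. -/
open FirstOrder FirstOrder.Language Cardinal

namespace Paper

variable (L : FirstOrder.Language.{0, 0})

/-- A tuple `a` generates `M`: every element is the value of a term at `a`. -/
def Generates {M : Type*} [L.Structure M] {n : ℕ} (a : Fin n → M) : Prop :=
  ∀ y : M, ∃ t : L.Term (Fin n), t.realize a = y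

/-- A type over the language `L(c₁,…,cₙ)` in `k` free variables, represented as a set of
`L`-formulas in variables `Fin n ⊕ Fin k` (the first block playing the role of the constants). -/
def NType (n : ℕ) : Type := Σ k : ℕ, Set (L.Formula (Fin n ⊕ Fin k))

variable {L}

/-- The pair `(M, a)` realizes the type `p` (in the language with the constants interpreted
as `a`). -/
def RealizesNType {M : Type*} [L.Structure M] {n : ℕ} (a : Fin n → M) (p : NType L n) : Prop :=
  ∃ v : Fin p.1 → M, ∀ φ ∈ p.2, φ.Realize (Sum.elim a v)

variable (L) in
/-- The type `pₙ(y) = { y ≠ τ(c̄) | τ an L-term }`. -/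
def pType (n : ℕ) : NType L n :=
  ⟨1, { φ | ∃ t : L.Term (Fin n),
    φ = (Term.equal (t.relabel Sum.inl) (Term.var (Sum.inr 0))).not }⟩

/-- The complete type `p_ā(M)` of a tuple, viewed as a set of sentences of `L(c̄)`. -/
def ctype {M : Type*} [L.Structure M] {n : ℕ} (a : Fin n → M) : NType L n :=
  ⟨0, { φ | ∃ ψ : L.Formula (Fin n), ψ.Realize a ∧ φ = ψ.relabel Sum.inl }⟩

/-- A type (in the language with constants) is supported over a class `K` of models-with-tuples
if some formula, satisfiable in `K`, forces realization of the type throughout `K`. -/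
def Supported {T : L.Theory} {n : ℕ} (K : Set (Σ M : Theory.ModelType.{0, 0, 0} T, Fin n → M))
    (p : NType L n) : Prop :=
  ∃ φ : L.Formula (Fin n ⊕ Fin p.1),
    (∃ P ∈ K, ∃ v : Fin p.1 → P.1, φ.Realize (Sum.elim P.2 v)) ∧
    ∀ P ∈ K, ∀ v : Fin p.1 → P.1, φ.Realize (Sum.elim P.2 v) →
      ∀ ψ ∈ p.2, ψ.Realize (Sum.elim P.2 v)

/-- `rk`: `RankEq T n α M` means the `n`-rank of `M` is `α`. Defined by transfinite
recursion: the rank is `α ≥ 1` iff for every generating `n`-tuple `ā`, `p_ā(M)` is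
supported over the class of models (with generating tuple) of `T` omitting `pₙ` and the
complete types of all models of smaller rank. -/
def RankEq (T : L.Theory) (n : ℕ) : Ordinal.{0} → Theory.ModelType.{0, 0, 0} T → Prop :=
  Ordinal.lt_wf.fix fun α ih M =>
    1 ≤ α ∧ (∃ a : Fin n → M, Generates L a) ∧
      ∀ a : Fin n → M, Generates L a →
        Supported
          { P : Σ N : T.ModelType, Fin n → N |
            ¬ RealizesNType (L := L) P.2 (pType L n) ∧
            ∀ β : Ordinal, (h : β < α) → ∀ N : T.ModelType, ih β h N →
              ∀ b : Fin n → N, Generates L b → ¬ RealizesNType (L := L) P.2 (ctype (L := L) b) }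
          (ctype a)

/-- The class `K(T|P_{n,α})`: models of `T` with a distinguished `n`-tuple, omitting `pₙ`
(equivalently, generated by the tuple) and omitting the complete type of every `n`-generated
model of `T` of rank `< α`. -/
def Kclass (T : L.Theory) (n : ℕ) (α : Ordinal.{0}) :
    Set (Σ M : Theory.ModelType.{0, 0, 0} T, Fin n → M) :=
  { P | ¬ RealizesNType (L := L) P.2 (pType L n) ∧
    ∀ β : Ordinal, β < α → ∀ N : T.ModelType, RankEq T n β N →
      ∀ b : Fin n → N, Generates L b → ¬ RealizesNType (L := L) P.2 (ctype (L := L) b) }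

variable (L) in
/-- `n`-generated models of `T` (with countable carrier). -/
abbrev NGenModel (T : L.Theory) (n : ℕ) : Type 1 :=
  { M : Theory.ModelType.{0, 0, 0} T // ∃ a : Fin n → M, Generates L a }

instance isoSetoid {T : L.Theory} {n : ℕ} : Setoid (NGenModel L T n) where
  r M N := Nonempty (M.1 ≃[L] N.1)
  iseqv := ⟨fun M => ⟨FirstOrder.Language.Equiv.refl L M.1⟩, fun ⟨e⟩ => ⟨e.symm⟩, fun ⟨e⟩ ⟨f⟩ => ⟨FirstOrder.Language.Equiv.comp f e⟩⟩

variable (L) in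
/-- `α_n(T)`: the number of isomorphism classes of `n`-generated models of `T`. -/
def alphaCard (T : L.Theory) (n : ℕ) : Cardinal.{1} :=
  Cardinal.mk (Quotient (isoSetoid (L := L) (T := T) (n := n)))

variable (L) in
/-- `T` is `n`-consistent: it has an `n`-generated model. -/
def NConsistent (T : L.Theory) (n : ℕ) : Prop :=
  ∃ M : Theory.ModelType.{0, 0, 0} T, ∃ a : Fin n → M, Generates L a


/-! ### Universal / existential formulas, ∀∃ theories -/

variable (L) in
/-- A universal formula: universal quantifiers over a quantifier-free formula. -/
def IsUniversalFormula {α : Type} (φ : L.Formula α) : Prop :=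
  ∃ (k : ℕ) (ψ : L.BoundedFormula α k), ψ.IsQF ∧ φ = ψ.alls

variable (L) in
/-- An existential formula: existential quantifiers over a quantifier-free formula. -/
def IsExistentialFormula {α : Type} (φ : L.Formula α) : Prop :=
  ∃ (k : ℕ) (ψ : L.BoundedFormula α k), ψ.IsQF ∧ φ = ψ.exs

/-- Iterated existential quantification of the last `k` bounded variables. -/
def exsTo {α : Type} : ∀ {m k : ℕ}, L.BoundedFormula α (m + k) → L.BoundedFormula α m
  | _, 0, φ => φ
  | _, _ + 1, φ => exsTo φ.ex

variable (L) in
/-- A `∀∃`-sentence: `∀ x̄ ∃ ȳ ψ` with `ψ` quantifier-free. -/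
def IsAESentence (σ : L.Sentence) : Prop :=
  ∃ (m k : ℕ) (ψ : L.BoundedFormula Empty (m + k)), ψ.IsQF ∧ σ = (exsTo ψ).alls

variable (L) in
/-- A `∀∃`-theory. -/
def IsAETheory (T : L.Theory) : Prop := ∀ σ ∈ T, IsAESentence L σ

/-- The universal type `p_{ā,∀}(M)` of a tuple: universal sentences of `L(c̄)` true of `ā`. -/
def utype {M : Type*} [L.Structure M] {n : ℕ} (a : Fin n → M) : NType L n :=
  ⟨0, { φ | ∃ ψ : L.Formula (Fin n),
    IsUniversalFormula L ψ ∧ ψ.Realize a ∧ φ = ψ.relabel Sum.inl }⟩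

/-- A universal type is existentially supported over a class `K` if some existential formula,
satisfiable in `K`, forces its realization throughout `K`. -/
def ESupported {T : L.Theory} {n : ℕ} (K : Set (Σ M : Theory.ModelType.{0, 0, 0} T, Fin n → M))
    (p : NType L n) : Prop :=
  ∃ φ : L.Formula (Fin n ⊕ Fin p.1), IsExistentialFormula L φ ∧
    (∃ P ∈ K, ∃ v : Fin p.1 → P.1, φ.Realize (Sum.elim P.2 v)) ∧
    ∀ P ∈ K, ∀ v : Fin p.1 → P.1, φ.Realize (Sum.elim P.2 v) →
      ∀ ψ ∈ p.2, ψ.Realize (Sum.elim P.2 v)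

/-- `Rk`: the rank defined from universal types and existential supports. -/
def URankEq (T : L.Theory) (n : ℕ) : Ordinal.{0} → Theory.ModelType.{0, 0, 0} T → Prop :=
  Ordinal.lt_wf.fix fun α ih M =>
    1 ≤ α ∧ (∃ a : Fin n → M, Generates L a) ∧
      ∀ a : Fin n → M, Generates L a →
        ESupported
          { P : Σ N : Theory.ModelType.{0, 0, 0} T, Fin n → N |
            ¬ RealizesNType (L := L) P.2 (pType L n) ∧
            ∀ β : Ordinal, (h : β < α) → ∀ N : Theory.ModelType.{0, 0, 0} T, ih β h N →
              ∀ b : Fin n → N, Generates L b → ¬ RealizesNType (L := L) P.2 (utype b) }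
          (utype a)

/-- The class `K(T|Q_{n,α})` of the universal rank. -/
def UKclass (T : L.Theory) (n : ℕ) (α : Ordinal.{0}) :
    Set (Σ M : Theory.ModelType.{0, 0, 0} T, Fin n → M) :=
  { P | ¬ RealizesNType (L := L) P.2 (pType L n) ∧
    ∀ β : Ordinal, β < α → ∀ N : Theory.ModelType.{0, 0, 0} T, URankEq T n β N →
      ∀ b : Fin n → N, Generates L b → ¬ RealizesNType (L := L) P.2 (utype b) }

/-! ### Types in finitely many variables, classes of models, omitting types -/

variable (L) in
/-- A type in finitely many variables. -/
def MType : Type := Σ k : ℕ, Set (L.Formula (Fin k))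

variable (L) in
/-- A type all of whose formulas are universal. -/
def IsUniversalMType (p : MType L) : Prop := ∀ φ ∈ p.2, IsUniversalFormula L φ

/-- A model realizes a type if some tuple satisfies all of its formulas. -/
def MRealizes {T : L.Theory} (M : Theory.ModelType.{0, 0, 0} T) (p : MType L) : Prop :=
  ∃ v : Fin p.1 → M, ∀ φ ∈ p.2, φ.Realize v

/-- The class `K(T|P)` of models of `T` omitting every type in `P`. -/
def KTP (T : L.Theory) (P : Set (MType L)) : Set (Theory.ModelType.{0, 0, 0} T) :=
  { M | ∀ p ∈ P, ¬ MRealizes M p }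

/-- A type is supported over a class `K` of models of `T`. -/
def MSupported {T : L.Theory} (K : Set (Theory.ModelType.{0, 0, 0} T)) (q : MType L) : Prop :=
  ∃ φ : L.Formula (Fin q.1),
    (∃ M ∈ K, ∃ v : Fin q.1 → M, φ.Realize v) ∧
    ∀ M ∈ K, ∀ v : Fin q.1 → M, φ.Realize v → ∀ ψ ∈ q.2, ψ.Realize v

/-- A universal type is existentially supported over a class `K` of models of `T`. -/
def MESupported {T : L.Theory} (K : Set (Theory.ModelType.{0, 0, 0} T)) (q : MType L) : Prop :=
  ∃ φ : L.Formula (Fin q.1), IsExistentialFormula L φ ∧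
    (∃ M ∈ K, ∃ v : Fin q.1 → M, φ.Realize v) ∧
    ∀ M ∈ K, ∀ v : Fin q.1 → M, φ.Realize v → ∀ ψ ∈ q.2, ψ.Realize v


/-! ### Groups -/

/-- The function symbols of the language of groups. -/
inductive GroupFunc : ℕ → Type
  | mul : GroupFunc 2
  | inv : GroupFunc 1
  | one : GroupFunc 0

/-- The first-order language of groups. -/
def grpLang : FirstOrder.Language.{0, 0} := ⟨GroupFunc, fun _ => Empty⟩

/-- Any group is a `grpLang`-structure. -/
instance grpStructure (G : Type*) [Group G] : grpLang.Structure G where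
  funMap {n} f v :=
    match f with
    | .mul => v 0 * v 1
    | .inv => (v 0)⁻¹
    | .one => 1
  RelMap {n} r := r.elim

/-- The universal theory `Th_∀(H)` of a group `H`. -/
def uTheoryOf (H : Type*) [Group H] : grpLang.Theory :=
  { σ | IsUniversalFormula grpLang σ ∧ H ⊨ σ }

/-- The algebraic set `V(S)` defined by a set `S ⊆ H ∗ F(x₁,…,xₙ)` of equations. -/
def Vset {H : Type} [Group H] {n : ℕ} (S : Set (Monoid.Coprod H (FreeGroup (Fin n)))) :
    Set (Fin n → H) :=
  { g | ∀ s ∈ S, Monoid.Coprod.lift (MonoidHom.id H) (FreeGroup.lift g) s = 1 }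

/-- A group `H` is equationally noetherian if every algebraic set over `H` is defined by a
finite subsystem. -/
def EquationallyNoetherian (H : Type) [Group H] : Prop :=
  ∀ (n : ℕ) (S : Set (Monoid.Coprod H (FreeGroup (Fin n)))),
    ∃ S₀ ⊆ S, S₀.Finite ∧ Vset S = Vset S₀

/-- Bundled finitely generated `H`-limit groups (with countable-universe carrier):
finitely generated groups satisfying the universal theory of `H`. -/
def LimitGroup (H : Type) [Group H] : Type 1 :=
  { G : GrpCat.{0} // Group.FG G ∧ (G : Type) ⊨ uTheoryOf H }

instance limitGroupSetoid {H : Type} [Group H] : Setoid (LimitGroup H) where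
  r A B := Nonempty ((A.1 : Type) ≃* (B.1 : Type))
  iseqv := ⟨fun A => ⟨MulEquiv.refl _⟩, fun ⟨e⟩ => ⟨e.symm⟩, fun ⟨e⟩ ⟨f⟩ => ⟨e.trans f⟩⟩

/-- `GRank H G γ` : the group `G`, as a model of `Th_∀(H)`, has universal rank `Rk(G) = γ`
(with respect to some tuple-length). -/
def GRank (H : Type) [Group H] (G : Type) [Group G] (hmod : G ⊨ uTheoryOf H)
    (γ : Ordinal.{0}) : Prop :=
  ∃ n : ℕ, URankEq (uTheoryOf H) n γ
    (@Theory.ModelType.of grpLang (uTheoryOf H) G _ hmod One.instNonempty)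

/-- `G` is `H`-determined: some finite set `X ⊆ G \ {1}` is such that every homomorphism
from `G` to an `H`-limit group killing no element of `X` is injective. -/
def HDetermined (H : Type) [Group H] (G : Type) [Group G] : Prop :=
  ∃ X : Finset G, (1 : G) ∉ X ∧
    ∀ (L' : Type) [Group L'], Group.FG L' → (L' ⊨ uTheoryOf H) →
      ∀ f : G →* L', (∀ x ∈ X, f x ≠ 1) → Function.Injective f

end Paper

/-!
Forcing with formulas: a condition is a formula in the variables `x₀, x₁, …` that is realized in
some model of `K = K(T|P)`. A type `q` unsupported over `K` can be omitted densely: if a condition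
`φ` forced `q` at `x̄`, then `∃ ȳ φ` would support `q`. Types in `P` are trivially unsupported
over `K(T|P)`. By Rasiowa–Sikorski an ideal of conditions meets the countably many dense sets
asking for Henkin witnesses and for the omission of each type of `P ∪ Q` at each tuple of
variables; by compactness its theory has a model, in which the values of the variables form a
countable elementary substructure (Tarski–Vaught) omitting `P ∪ Q`.
-/

namespace Paper

variable {L : FirstOrder.Language.{0, 0}}

section Realize

variable {M : Type*} [L.Structure M]

theorem realize_update_of_notMem_freeVarFinset {α : Type*} [DecidableEq α] {n : ℕ}
    {φ : L.BoundedFormula α n} {a : α} (ha : a ∉ φ.freeVarFinset) (v : α → M) (b : M)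
    (xs : Fin n → M) : φ.Realize (Function.update v a b) xs ↔ φ.Realize v xs :=
  (BoundedFormula.realize_restrictFreeVar (f := id)
      (v := Function.update v a b ∘ Subtype.val) _ fun _ => rfl).symm.trans
    (BoundedFormula.realize_restrictFreeVar v fun x =>
      (Function.update_of_ne (ne_of_mem_of_not_mem x.2 ha) b v :))

def instantiate (θ : L.BoundedFormula ℕ 1) (m : ℕ) : L.Formula ℕ :=
  θ.toFormula.relabel (Sum.elim id fun _ => m)

theorem realize_instantiate {θ : L.BoundedFormula ℕ 1} {m : ℕ} {v : ℕ → M} :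
    (instantiate θ m).Realize v ↔ θ.Realize v (fun _ => v m) := by
  rw [instantiate, Formula.realize_relabel, BoundedFormula.realize_toFormula]
  rfl

/-- `φ(x_{m 0}, …, x_{m (n-1)}, y)` with the last variable `y` still bound. -/
def relabelInit {n : ℕ} (φ : L.BoundedFormula Empty (n + 1)) (m : Fin n → ℕ) :
    L.BoundedFormula ℕ 1 :=
  BoundedFormula.relabel (Sum.elim Empty.elim (Fin.snoc (fun i => Sum.inl (m i)) (Sum.inr 0)))
    φ.toFormula

theorem realize_relabelInit {n : ℕ} {φ : L.BoundedFormula Empty (n + 1)} {m : Fin n → ℕ}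
    {v : ℕ → M} {xs : Fin 1 → M} :
    (relabelInit φ m).Realize v xs ↔ φ.Realize default (Fin.snoc (v ∘ m) (xs 0)) := by
  rw [relabelInit, BoundedFormula.realize_relabel]
  have h0 : (xs ∘ Fin.natAdd 1 : Fin 0 → M) = default := Subsingleton.elim _ _
  rw [h0, ← Formula.Realize, BoundedFormula.realize_toFormula]
  refine iff_of_eq ?_
  congr 1
  · exact Subsingleton.elim _ _
  · rw [Function.comp_assoc, Sum.elim_comp_inr, Fin.comp_snoc]
    rfl

theorem exists_formula_realize_iff_exists_comp_eq (φ : L.Formula ℕ) {k : ℕ} (m : Fin k → ℕ) :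
    ∃ χ : L.Formula (Fin k), ∀ (M : Type) [L.Structure M] [Nonempty M] (u : Fin k → M),
      χ.Realize u ↔ ∃ v : ℕ → M, φ.Realize v ∧ v ∘ m = u := by
  let S : Finset ℕ := φ.freeVarFinset ∪ Finset.univ.image m
  have hmS (i : Fin k) : m i ∈ S :=
    Finset.mem_union_right _ (Finset.mem_image_of_mem m (Finset.mem_univ i))
  refine ⟨Formula.iExs S
    (φ.restrictFreeVar (fun a => Sum.inr ⟨a, Finset.mem_union_left _ a.2⟩) ⊓
      Formula.iInf fun i => Term.equal (var (Sum.inl i)) (var (Sum.inr ⟨m i, hmS i⟩))),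
    fun M _ _ u => ?_⟩
  simp only [Formula.realize_iExs, Formula.realize_inf, Formula.realize_iInf,
    Formula.realize_equal, Term.realize_var, Sum.elim_inl, Sum.elim_inr]
  constructor
  · rintro ⟨w, hφ, hu⟩
    refine ⟨fun a => if h : a ∈ S then w ⟨a, h⟩ else Classical.arbitrary M, ?_, ?_⟩
    · refine (BoundedFormula.realize_restrictFreeVar _ fun a => ?_).1 hφ
      rw [dif_pos (show (a : ℕ) ∈ S from Finset.mem_union_left _ a.2)]
      rfl
    · funext i
      simp [hu i, hmS i]
  · rintro ⟨v, hφ, rfl⟩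
    refine ⟨fun a => v a, ?_, fun _ => rfl⟩
    exact (BoundedFormula.realize_restrictFreeVar v fun _ => by rfl).2 hφ

end Realize

section Forcing

variable {T : L.Theory} (K : Set T.ModelType)

def IsSatisfiableIn (φ : L.Formula ℕ) : Prop :=
  ∃ M ∈ K, ∃ v : ℕ → M, φ.Realize v

def EntailsIn (φ ψ : L.Formula ℕ) : Prop :=
  ∀ M ∈ K, ∀ v : ℕ → M, φ.Realize v → ψ.Realize v

/-- Ordered so that larger conditions are stronger. -/
def Condition : Type :=
  { φ : L.Formula ℕ // IsSatisfiableIn K φ }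

instance : Preorder (Condition K) where
  le c d := EntailsIn K d.1 c.1
  le_refl _ _ _ _ := id
  le_trans _ _ _ hab hbc M hM v hv := hab M hM v (hbc M hM v hv)

variable {K}

namespace Condition

theorem exists_le_entailsIn {c : Condition K} {χ : L.Formula ℕ}
    (h : IsSatisfiableIn K (c.1 ⊓ χ)) : ∃ d : Condition K, EntailsIn K d.1 χ ∧ c ≤ d :=
  ⟨⟨_, h⟩, fun _ _ _ hv => (Formula.realize_inf.1 hv).2,
    fun _ _ _ hv => (Formula.realize_inf.1 hv).1⟩

theorem isCofinal_entailsIn_not_ex_or_instantiate (θ : L.BoundedFormula ℕ 1) :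
    IsCofinal {d : Condition K |
      EntailsIn K d.1 θ.ex.not ∨ ∃ m, EntailsIn K d.1 (instantiate θ m)} := by
  intro c
  by_cases hsat : IsSatisfiableIn K (c.1 ⊓ θ.ex.not)
  · obtain ⟨d, hd, hcd⟩ := exists_le_entailsIn hsat
    exact ⟨d, Or.inl hd, hcd⟩
  obtain ⟨M, hM, v, hv⟩ := c.2
  obtain ⟨b, hb⟩ : ∃ b, θ.Realize v (fun _ => b) := by
    by_contra hθ
    exact hsat ⟨M, hM, v,
      Formula.realize_inf.2 ⟨hv, fun hex => hθ (BoundedFormula.realize_ex.1 hex)⟩⟩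
  -- a variable fresh for `c` and `θ` can be assigned the witness `b`
  obtain ⟨m, hm⟩ := Infinite.exists_notMem_finset (c.1.freeVarFinset ∪ θ.freeVarFinset)
  rw [Finset.mem_union, not_or] at hm
  obtain ⟨d, hd, hcd⟩ := exists_le_entailsIn (c := c) (χ := instantiate θ m)
    ⟨M, hM, Function.update v m b, Formula.realize_inf.2
      ⟨(realize_update_of_notMem_freeVarFinset hm.1 v b _).2 hv, by
        rw [realize_instantiate, Function.update_self]
        exact (realize_update_of_notMem_freeVarFinset hm.2 v b _).2 hb⟩⟩
  exact ⟨d, Or.inr ⟨m, hd⟩, hcd⟩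

theorem isCofinal_entailsIn_not_relabel {q : MType L} (hq : ¬ MSupported K q)
    (m : Fin q.1 → ℕ) :
    IsCofinal {d : Condition K | ∃ ψ ∈ q.2, EntailsIn K d.1 (ψ.relabel m).not} := by
  intro c
  by_cases hsat : ∃ ψ ∈ q.2, IsSatisfiableIn K (c.1 ⊓ (ψ.relabel m).not)
  · obtain ⟨ψ, hψ, hψsat⟩ := hsat
    obtain ⟨d, hd, hcd⟩ := exists_le_entailsIn hψsat
    exact ⟨d, ⟨ψ, hψ, hd⟩, hcd⟩
  -- otherwise `c` forces `q` at `x̄ₘ`, so `∃ ȳ c` supports `q`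
  push Not at hsat
  obtain ⟨χ, hχ⟩ := exists_formula_realize_iff_exists_comp_eq c.1 m
  refine absurd ⟨χ, ?_, fun M hM u hu ψ hψ => ?_⟩ hq
  · obtain ⟨M, hM, v, hv⟩ := c.2
    exact ⟨M, hM, v ∘ m, (hχ M _).2 ⟨v, hv, rfl⟩⟩
  · obtain ⟨v, hv, rfl⟩ := (hχ M u).1 hu
    by_contra hψv
    exact hsat ψ hψ ⟨M, hM, v, Formula.realize_inf.2 ⟨hv, by
      rwa [Formula.realize_not, Formula.realize_relabel]⟩⟩

end Condition

end Forcing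

theorem not_mSupported_KTP_of_mem {T : L.Theory} {P : Set (MType L)} {p : MType L}
    (hp : p ∈ P) : ¬ MSupported (KTP T P) p := by
  rintro ⟨φ, ⟨M, hM, v, hv⟩, hforce⟩
  exact hM p hp ⟨v, hforce M hM v hv⟩

theorem exists_model_realize_of_directed {α ι : Type} [Nonempty ι] (T : L.Theory)
    {Γ : ι → Set (L.Formula α)} (hΓ : Directed (· ⊆ ·) Γ)
    (hsat : ∀ i, ∃ (M : T.ModelType) (v : α → M), ∀ ψ ∈ Γ i, ψ.Realize v) :
    ∃ (N : Theory.ModelType.{0, 0, 0} T) (v : α → N), ∀ i, ∀ ψ ∈ Γ i, ψ.Realize v := by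
  -- the variables become new constants
  let T' : ι → L[[α]].Theory := fun i =>
    (L.lhomWithConstants α).onTheory T ∪ Formula.equivSentence '' Γ i
  have hT' : Directed (· ⊆ ·) T' :=
    Directed.mono_comp _
      (g := fun s => (L.lhomWithConstants α).onTheory T ∪ Formula.equivSentence '' s)
      (fun _ _ h => Set.union_subset_union_right _ (Set.image_mono h)) hΓ
  have hsat' : Theory.IsSatisfiable (⋃ i, T' i) := by
    refine (Theory.isSatisfiable_directed_union_iff hT').2 fun i => ?_
    obtain ⟨M, v, hv⟩ := hsat i
    let : (constantsOn α).Structure M := constantsOn.structure v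
    have : M ⊨ (L.lhomWithConstants α).onTheory T := (LHom.onTheory_model _ _).2 inferInstance
    have : M ⊨ T' i := by
      refine Theory.model_union_iff.2 ⟨this, ⟨?_⟩⟩
      rintro _ ⟨ψ, hψ, rfl⟩
      exact (Formula.realize_equivSentence M ψ).2 (hv ψ hψ)
    exact Theory.Model.isSatisfiable M
  let N := hsat'.some
  let : L.Structure N := (L.lhomWithConstants α).reduct N
  have : (L.lhomWithConstants α).IsExpansionOn N := LHom.isExpansionOn_reduct _ _
  have : N ⊨ T := (LHom.onTheory_model _ _).1 <| N.is_model.mono <|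
    Set.subset_iUnion_of_subset (Classical.arbitrary ι) Set.subset_union_left
  refine ⟨Theory.ModelType.of T N.Carrier, fun a => (L.con a : N), fun i ψ hψ => ?_⟩
  exact (Formula.realize_equivSentence N ψ).1 <|
    Theory.realize_sentence_of_mem (⋃ i, T' i : L[[α]].Theory) <|
      Set.mem_iUnion.2 ⟨i, Or.inr ⟨ψ, hψ, rfl⟩⟩

theorem Condition.exists_model_realize_of_ideal {T : L.Theory} {K : Set T.ModelType}
    (I : Order.Ideal (Condition K)) :
    ∃ (N : Theory.ModelType.{0, 0, 0} T) (v : ℕ → N),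
      ∀ d ∈ I, ∀ ψ, EntailsIn K d.1 ψ → ψ.Realize v := by
  have : Nonempty I := I.nonempty.to_subtype
  have hdir : Directed (· ⊆ ·) fun d : I => {ψ | EntailsIn K d.1.1 ψ} :=
    Directed.mono_comp _ (g := fun c : Condition K => {ψ | EntailsIn K c.1 ψ})
      (fun _ _ hcd _ hψ M hM v hv => hψ M hM v (hcd M hM v hv))
      (directedOn_iff_directed.1 I.directed)
  obtain ⟨N, v, hv⟩ := exists_model_realize_of_directed T hdir fun d => by
    obtain ⟨M, hM, v, hv⟩ := d.1.2
    exact ⟨M, v, fun ψ hψ => hψ M hM v hv⟩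
  exact ⟨N, v, fun d hd ψ hψ => hv ⟨d, hd⟩ ψ hψ⟩

variable (L) in
def IsHenkinAssignment {N : Type*} [L.Structure N] (v : ℕ → N) : Prop :=
  ∀ (θ : L.BoundedFormula ℕ 1) (b : N), θ.Realize v (fun _ => b) →
    ∃ m, θ.Realize v (fun _ => v m)

namespace IsHenkinAssignment

variable {N : Type*} [L.Structure N] {v : ℕ → N}

theorem exists_eq_of_mem_closure (hv : IsHenkinAssignment L v) {x : N}
    (hx : x ∈ Substructure.closure L (Set.range v)) : ∃ m, v m = x := by
  obtain ⟨t, rfl⟩ := Substructure.mem_closure_iff_exists_term.1 hx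
  choose r hr using fun y : Set.range v => y.2
  have hθ (b : N) : ((t.relabel (Sum.inl ∘ r)).bdEqual (&0) : L.BoundedFormula ℕ 1).Realize
      v (fun _ => b) ↔ t.realize Subtype.val = b := by
    rw [BoundedFormula.realize_bdEqual, Term.realize_relabel, ← Function.comp_assoc,
      Sum.elim_comp_inl, show v ∘ r = Subtype.val from funext hr]
    rfl
  obtain ⟨m, hm⟩ := hv _ _ ((hθ _).2 rfl)
  exact ⟨m, ((hθ _).1 hm).symm⟩

theorem isElementary_closure_range (hv : IsHenkinAssignment L v) :
    (Substructure.closure L (Set.range v)).IsElementary := by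
  refine Substructure.isElementary_of_exists _ fun n φ x a ha => ?_
  choose m hm using fun i => hv.exists_eq_of_mem_closure (x i).2
  have hxm : Subtype.val ∘ x = v ∘ m := funext fun i => (hm i).symm
  rw [hxm] at ha ⊢
  obtain ⟨j, hj⟩ := hv (relabelInit φ m) a (realize_relabelInit.2 ha)
  exact ⟨⟨v j, Substructure.subset_closure (Set.mem_range_self j)⟩, realize_relabelInit.1 hj⟩

theorem countable_closure_range (hv : IsHenkinAssignment L v) :
    Countable (Substructure.closure L (Set.range v)) :=
  Function.Surjective.countable (f := fun m => ⟨v m, Substructure.subset_closure ⟨m, rfl⟩⟩)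
    fun x => (hv.exists_eq_of_mem_closure x.2).imp fun _ hm => Subtype.ext hm

end IsHenkinAssignment

theorem exists_isHenkinAssignment_omitting [Countable L.Symbols] {T : L.Theory}
    {K : Set (Theory.ModelType.{0, 0, 0} T)} (hK : K.Nonempty) {R : Set (MType L)}
    (hR : R.Countable) (hun : ∀ q ∈ R, ¬ MSupported K q) :
    ∃ (N : Theory.ModelType.{0, 0, 0} T) (v : ℕ → N), IsHenkinAssignment L v ∧
      ∀ q ∈ R, ∀ m : Fin q.1 → ℕ, ∃ ψ ∈ q.2, ¬ ψ.Realize (v ∘ m) := by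
  let ι := L.BoundedFormula ℕ 1 ⊕ Σ q : R, (Fin q.1.1 → ℕ)
  have : Countable (L.BoundedFormula ℕ 1) := (sigma_mk_injective (i := 1)).countable
  have : Countable R := hR.to_subtype
  let : Encodable ι := Encodable.ofCountable ι
  let 𝒟 : ι → Order.Cofinal (Condition K) := Sum.elim
    (fun θ => ⟨_, Condition.isCofinal_entailsIn_not_ex_or_instantiate θ⟩)
    (fun qm => ⟨_, Condition.isCofinal_entailsIn_not_relabel (hun _ qm.1.2) qm.2⟩)
  obtain ⟨M, hM⟩ := hK
  let c₀ : Condition K :=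
    ⟨⊤, M, hM, fun _ => Classical.arbitrary M, Formula.realize_top.2 trivial⟩
  obtain ⟨N, v, hv⟩ := Condition.exists_model_realize_of_ideal (Order.idealOfCofinals c₀ 𝒟)
  refine ⟨N, v, fun θ b hb => ?_, fun q hq m => ?_⟩
  · obtain ⟨d, hd | ⟨j, hj⟩, hdI⟩ := Order.cofinal_meets_idealOfCofinals c₀ 𝒟 (.inl θ)
    · exact absurd (BoundedFormula.realize_ex.2 ⟨b, hb⟩) (hv d hdI _ hd)
    · exact ⟨j, realize_instantiate.1 (hv d hdI _ hj)⟩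
  · obtain ⟨d, ⟨ψ, hψ, hd⟩, hdI⟩ :=
      Order.cofinal_meets_idealOfCofinals c₀ 𝒟 (.inr ⟨⟨q, hq⟩, m⟩)
    exact ⟨ψ, hψ, by simpa [Formula.realize_relabel] using hv d hdI _ hd⟩

theorem exists_countable_model_omitting [Countable L.Symbols] {T : L.Theory}
    {K : Set (Theory.ModelType.{0, 0, 0} T)} (hK : K.Nonempty) {R : Set (MType L)}
    (hR : R.Countable) (hun : ∀ q ∈ R, ¬ MSupported K q) :
    ∃ M : Theory.ModelType.{0, 0, 0} T, Countable M ∧ ∀ q ∈ R, ¬ MRealizes M q := by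
  obtain ⟨N, v, hv, homit⟩ := exists_isHenkinAssignment_omitting hK hR hun
  let S : L.ElementarySubstructure N := ⟨_, hv.isElementary_closure_range⟩
  have : Nonempty S := ⟨⟨v 0, Substructure.subset_closure (Set.mem_range_self 0)⟩⟩
  refine ⟨Theory.ModelType.of T S, hv.countable_closure_range, fun q hq ⟨w, hw⟩ => ?_⟩
  choose m hm using fun i => hv.exists_eq_of_mem_closure (w i).2
  obtain ⟨ψ, hψ, hnot⟩ := homit q hq m
  rw [show v ∘ m = Subtype.val ∘ w from funext hm] at hnot
  exact hnot ((S.subtype.map_formula ψ w).2 (hw ψ hψ))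

end Paper

/-- Refined omitting types theorem: if `K(T|P)` is nonempty and every type
in the countable set `Q` is unsupported over `K(T|P)`, then some countable model in
`K(T|P)` omits every type in `Q`. -/
theorem stmt_2 (L : FirstOrder.Language.{0, 0}) [Countable L.Symbols] (T : L.Theory)
    (P Q : Set (Paper.MType L)) (hP : P.Countable) (hQ : Q.Countable)
    (hne : (Paper.KTP T P).Nonempty)
    (hQun : ∀ q ∈ Q, ¬ Paper.MSupported (Paper.KTP T P) q) :
    ∃ M ∈ Paper.KTP T P, Countable (M : Type) ∧ ∀ q ∈ Q, ¬ Paper.MRealizes M q := by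
  obtain ⟨M, hMc, hM⟩ := Paper.exists_countable_model_omitting hne (hP.union hQ)
    fun q hq => hq.elim Paper.not_mSupported_KTP_of_mem (hQun q)
  exact ⟨M, fun p hp => hM p (Or.inl hp), hMc, fun q hq => hM q (Or.inr hq)⟩
end

section
/- Let T be a theory, P a countable set of types with K(T|P) nonempty, and let T' be the set of all L-sentences true in every model of K(T|P). Then every type p ∈ P is unsupported over the class of all models of T'. -/
open FirstOrder FirstOrder.Language Cardinal

/-! If `φ` supported `p` over the models of `T'`, then either `φ` is satisfied in some model of
`K(T|P)`, which is a model of `T'` and hence realizes `p`, or `∀ x̄, ¬ φ(x̄)` belongs to `T'`, so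
`φ` is satisfied in no model of `T'` at all. -/

namespace Paper

variable {L : FirstOrder.Language.{0, 0}} {T : L.Theory}

def theoryOfClass (K : Set (Theory.ModelType.{0, 0, 0} T)) : L.Theory :=
  { σ | ∀ M ∈ K, (M : Type) ⊨ σ }

variable {K : Set (Theory.ModelType.{0, 0, 0} T)}

theorem model_theoryOfClass {M : T.ModelType} (hM : M ∈ K) : (M : Type) ⊨ theoryOfClass K :=
  ⟨fun _ hσ => hσ M hM⟩

theorem exists_mem_realize_of_model_theoryOfClass {k : ℕ} {φ : L.Formula (Fin k)}
    (M : (theoryOfClass K).ModelType) (v : Fin k → M) (hφ : φ.Realize v) :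
    ∃ N ∈ K, ∃ w : Fin k → N, φ.Realize w := by
  by_contra! hnone
  have hσ : Formula.iAlls (Fin k) (φ.not.relabel Sum.inr) ∈ theoryOfClass K := fun N hN =>
    Formula.realize_iAlls.2 fun w => by simpa using hnone N hN w
  have hnot := Formula.realize_iAlls.1 (M.is_model.realize_of_mem _ hσ) v
  simp only [Formula.realize_not, Formula.realize_relabel, Sum.elim_comp_inr] at hnot
  exact hnot hφ

theorem exists_mem_mRealizes_of_mSupported_theoryOfClass {q : MType L}
    (hq : MSupported (T := theoryOfClass K) Set.univ q) :
    ∃ N ∈ K, MRealizes N q := by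
  obtain ⟨φ, ⟨M, -, v, hφ⟩, hforce⟩ := hq
  obtain ⟨N, hN, w, hw⟩ := exists_mem_realize_of_model_theoryOfClass M v hφ
  have := model_theoryOfClass hN
  exact ⟨N, hN, w, hforce (Theory.ModelType.of _ N) (Set.mem_univ _) w hw⟩

end Paper

theorem stmt_3_general (L : FirstOrder.Language.{0, 0}) (T : L.Theory)
    (P : Set (Paper.MType L)) :
    ∀ p ∈ P,
      ¬ Paper.MSupported
        (T := { σ : L.Sentence | ∀ M ∈ Paper.KTP T P, (M : Type) ⊨ σ })
        Set.univ p := by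
  intro p hp hsup
  obtain ⟨M, hM, hrealizes⟩ := Paper.exists_mem_mRealizes_of_mSupported_theoryOfClass hsup
  exact hM p hp hrealizes

/-- If `T'` is the set of sentences true in every model of `K(T|P)`, then
every `p ∈ P` is unsupported over the class of all models of `T'`. -/
theorem stmt_3 (L : FirstOrder.Language.{0, 0}) [Countable L.Symbols] (T : L.Theory)
    (P : Set (Paper.MType L)) (hP : P.Countable) (hne : (Paper.KTP T P).Nonempty) :
    ∀ p ∈ P,
      ¬ Paper.MSupported
        (T := { σ : L.Sentence | ∀ M ∈ Paper.KTP T P, (M : Type) ⊨ σ })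
        Set.univ p :=
  stmt_3_general L T P
end

section
/- Let T be a theory in a countable language and M an n-generated model of T that is also m-generated. Then the n-rank of M equals the m-rank of M: rk_n(M) = rk_m(M) (including the case where both are ∞). -/
open FirstOrder FirstOrder.Language Cardinal

/-
By induction on the rank. An `n`-generating tuple `ā` and an `m`-generating tuple `b̄` of `M`
are interdefinable by terms, `ā = s(b̄)` and `b̄ = t(ā)`. If `φ(x̄)` supports `p_ā(M)` over
`K(T|P_{n,γ})`, then `φ(s(ȳ)) ∧ ȳ = t(s(ȳ))` supports `p_b̄(M)` over `K(T|P_{m,γ})`: a tuple `c̄`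
satisfying it is recovered as `t(s(c̄))`, so `s(c̄)` generates the same model, and by the
induction hypothesis that model has no `n`-rank below `γ` iff it has no `m`-rank below `γ`.
The rank of a generated model, and hence membership in these classes, depends only on the
complete type of a generating tuple, since term substitution transports generating tuples
between two models generated by tuples of the same type.
-/

namespace Paper

variable {L : FirstOrder.Language.{0, 0}}

section Realize

variable {M N : Type*} [L.Structure M] [L.Structure N]

theorem formula_realize_subst {α β : Type} {φ : L.Formula α} {tf : α → L.Term β} {v : β → M} :
    Formula.Realize (φ.subst tf) v ↔ φ.Realize fun a => (tf a).realize v :=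
  BoundedFormula.realize_subst

theorem realize_iff_of_forall_realize_imp {α : Type} {b : α → M} {c : α → N}
    (h : ∀ ψ : L.Formula α, ψ.Realize b → ψ.Realize c) (ψ : L.Formula α) :
    ψ.Realize b ↔ ψ.Realize c :=
  ⟨h ψ, fun hc => by_contra fun hb => Formula.realize_not.1 (h ψ.not (Formula.realize_not.2 hb)) hc⟩

theorem forall_realize_imp_terms {α β : Type} {a : α → M} {d : α → N}
    (h : ∀ ψ : L.Formula α, ψ.Realize a → ψ.Realize d) (t : β → L.Term α) (ψ : L.Formula β)
    (hψ : ψ.Realize fun i => (t i).realize a) : ψ.Realize fun i => (t i).realize d :=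
  formula_realize_subst.1 (h _ (formula_realize_subst.2 hψ))

theorem Generates.of_terms {n k : ℕ} {c : Fin n → M} (hc : Generates L c) {d : Fin k → M}
    (t : Fin n → L.Term (Fin k)) (htd : ∀ i, (t i).realize d = c i) : Generates L d := by
  intro y
  obtain ⟨u, rfl⟩ := hc y
  refine ⟨u.subst t, ?_⟩
  rw [Term.realize_subst, funext htd]

end Realize

section Types

variable {M N : Type*} [L.Structure M] [L.Structure N] {n : ℕ}

theorem realizesNType_pType_iff (a : Fin n → M) :
    RealizesNType a (pType L n) ↔ ∃ y : M, ∀ t : L.Term (Fin n), t.realize a ≠ y := by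
  have key : ∀ (v : Fin 1 → M) (t : L.Term (Fin n)),
      ((Term.equal (t.relabel Sum.inl) (var (Sum.inr 0))).not : L.Formula _).Realize
        (Sum.elim a v) ↔ t.realize a ≠ v 0 := by
    simp
  constructor
  · rintro ⟨v, hv⟩
    exact ⟨v ⟨0, Nat.one_pos⟩, fun t => (key v t).1 (hv _ ⟨t, rfl⟩)⟩
  · rintro ⟨y, hy⟩
    exact ⟨fun _ => y, by rintro _ ⟨t, rfl⟩; exact (key _ t).2 (hy t)⟩

theorem not_realizesNType_pType_iff (a : Fin n → M) :
    ¬ RealizesNType a (pType L n) ↔ Generates L a := by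
  simp only [realizesNType_pType_iff, Generates, not_exists, not_forall, not_not]

theorem forall_mem_ctype_iff (a : Fin n → M) (c : Fin n → N)
    (v : Fin (ctype (L := L) a).1 → N) :
    (∀ ψ ∈ (ctype (L := L) a).2, ψ.Realize (Sum.elim c v)) ↔
      ∀ ψ : L.Formula (Fin n), ψ.Realize a → ψ.Realize c := by
  constructor
  · intro h ψ hψ
    simpa using h (ψ.relabel Sum.inl) ⟨ψ, hψ, rfl⟩
  · rintro h _ ⟨ψ, hψ, rfl⟩
    exact Formula.realize_relabel.2 (h ψ hψ)

theorem realizesNType_ctype_iff (a : Fin n → M) (c : Fin n → N) :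
    RealizesNType c (ctype (L := L) a) ↔ ∀ ψ : L.Formula (Fin n), ψ.Realize a → ψ.Realize c :=
  ⟨fun ⟨v, hv⟩ => (forall_mem_ctype_iff a c v).1 hv,
    fun h => ⟨finZeroElim, (forall_mem_ctype_iff a c _).2 h⟩⟩

theorem ctype_eq_of_realize_iff {a : Fin n → M} {c : Fin n → N}
    (h : ∀ ψ : L.Formula (Fin n), ψ.Realize a ↔ ψ.Realize c) :
    ctype (L := L) a = ctype (L := L) c := by
  unfold ctype
  congr 2
  ext φ
  simp only [h]

theorem supported_ctype_iff {T : L.Theory} {K : Set (Σ P : T.ModelType, Fin n → P)}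
    (a : Fin n → M) :
    Supported K (ctype (L := L) a) ↔ ∃ φ : L.Formula (Fin n), (∃ P ∈ K, φ.Realize P.2) ∧
      ∀ P ∈ K, φ.Realize P.2 → ∀ ψ : L.Formula (Fin n), ψ.Realize a → ψ.Realize P.2 := by
  set ρ : Fin n ⊕ Fin (ctype (L := L) a).1 → Fin n := Sum.elim id fun x => x.elim0
  have hρ : ∀ {P : Type} (c : Fin n → P) (v : Fin (ctype (L := L) a).1 → P),
      c ∘ ρ = Sum.elim c v := fun c v => by
    funext x; rcases x with j | x
    · rfl
    · exact x.elim0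
  constructor
  · rintro ⟨φ, ⟨P, hP, v, hφP⟩, hφ⟩
    refine ⟨φ.relabel ρ, ⟨P, hP, ?_⟩, fun Q hQ hφQ => ?_⟩
    · rwa [Formula.realize_relabel, hρ P.2 v]
    · rw [Formula.realize_relabel, hρ Q.2 fun x => x.elim0] at hφQ
      exact (forall_mem_ctype_iff a Q.2 _).1 (hφ Q hQ _ hφQ)
  · rintro ⟨φ, ⟨P, hP, hφP⟩, hφ⟩
    refine ⟨φ.relabel Sum.inl, ⟨P, hP, finZeroElim, Formula.realize_relabel.2 hφP⟩,
      fun Q hQ v hφQ => ?_⟩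
    rw [Formula.realize_relabel, Sum.elim_comp_inl] at hφQ
    exact (forall_mem_ctype_iff a Q.2 v).2 (hφ Q hQ hφQ)

end Types

section Rank

variable {T : L.Theory} {k : ℕ}

theorem rankEq_iff {γ : Ordinal} {M : T.ModelType} :
    RankEq T k γ M ↔ 1 ≤ γ ∧ (∃ a : Fin k → M, Generates L a) ∧
      ∀ a : Fin k → M, Generates L a → Supported (Kclass T k γ) (ctype (L := L) a) := by
  rw [RankEq, WellFounded.fix_eq]
  rfl

theorem not_rankEq_of_lt {β γ : Ordinal} (hβγ : β < γ) {M : T.ModelType}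
    (hγ : RankEq T k γ M) : ¬ RankEq T k β M := by
  intro hβ
  obtain ⟨-, ⟨a, ha⟩, hsupp⟩ := rankEq_iff.1 hγ
  obtain ⟨φ, ⟨P, hP, v, hφP⟩, hφ⟩ := hsupp a ha
  exact hP.2 β hβγ M hβ a ha ⟨v, hφ P hP v hφP⟩

theorem exists_generates_realize_iff {M N : Type*} [L.Structure M] [L.Structure N]
    {b : Fin k → M} {c : Fin k → N} (hb : Generates L b) (hc : Generates L c)
    (htp : ∀ ψ : L.Formula (Fin k), ψ.Realize b ↔ ψ.Realize c) {n : ℕ} {a : Fin n → M}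
    (ha : Generates L a) :
    ∃ c' : Fin n → N, Generates L c' ∧ ∀ ψ : L.Formula (Fin n), ψ.Realize a ↔ ψ.Realize c' := by
  choose u hu using fun j => hb (a j)
  choose v hv using fun i => ha (b i)
  have hua : (fun j => (u j).realize b) = a := funext hu
  refine ⟨fun j => (u j).realize c, Generates.of_terms hc v fun i => ?_,
    realize_iff_of_forall_realize_imp fun ψ => hua ▸ forall_realize_imp_terms (htp · |>.1) u ψ⟩
  have hb_eq : (Term.equal (var i) ((v i).subst u) : L.Formula (Fin k)).Realize b := by
    simp [Term.realize_subst, hua, hv]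
  simpa [Term.realize_subst, eq_comm] using (htp _).1 hb_eq

theorem RankEq.of_realize_iff {β : Ordinal} {M N : T.ModelType} {b : Fin k → M} {c : Fin k → N}
    (hb : Generates L b) (hc : Generates L c)
    (htp : ∀ ψ : L.Formula (Fin k), ψ.Realize b ↔ ψ.Realize c) (h : RankEq T k β N) :
    RankEq T k β M := by
  obtain ⟨hβ, -, hsupp⟩ := rankEq_iff.1 h
  refine rankEq_iff.2 ⟨hβ, ⟨b, hb⟩, fun a ha => ?_⟩
  obtain ⟨c', hc', htp'⟩ := exists_generates_realize_iff hb hc htp ha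
  rw [ctype_eq_of_realize_iff htp']
  exact hsupp c' hc'

theorem mem_Kclass_iff {γ : Ordinal} {Q : T.ModelType} {c : Fin k → Q} :
    (⟨Q, c⟩ : Σ P : T.ModelType, Fin k → P) ∈ Kclass T k γ ↔
      Generates L c ∧ ∀ β < γ, ¬ RankEq T k β Q := by
  refine ⟨fun h => ?_, fun ⟨hc, hno⟩ => ⟨(not_realizesNType_pType_iff c).2 hc, ?_⟩⟩
  · have hc := (not_realizesNType_pType_iff c).1 h.1
    exact ⟨hc, fun β hβ hQ => h.2 β hβ Q hQ c hc ((realizesNType_ctype_iff c c).2 fun _ => id)⟩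
  · intro β hβ N hN b hb hcb
    have htp := realize_iff_of_forall_realize_imp ((realizesNType_ctype_iff b c).1 hcb)
    exact hno β hβ (hN.of_realize_iff hc hb fun ψ => (htp ψ).symm)

end Rank

def RanksAgreeAt (T : L.Theory) (n m : ℕ) (γ : Ordinal) : Prop :=
  ∀ M : T.ModelType, (∃ a : Fin n → M, Generates L a) → (∃ b : Fin m → M, Generates L b) →
    (RankEq T n γ M ↔ RankEq T m γ M)

section Agreement

variable {T : L.Theory} {n m : ℕ}

theorem RanksAgreeAt.symm {γ : Ordinal} (h : RanksAgreeAt T n m γ) : RanksAgreeAt T m n γ :=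
  fun M hm hn => (h M hn hm).symm

variable {γ : Ordinal}

theorem mem_Kclass_iff_of_ranksAgreeAt (IH : ∀ β < γ, RanksAgreeAt T n m β)
    {P : T.ModelType} {c : Fin n → P} {d : Fin m → P}
    (hc : Generates L c) (hd : Generates L d) :
    (⟨P, c⟩ : Σ Q : T.ModelType, Fin n → Q) ∈ Kclass T n γ ↔
      (⟨P, d⟩ : Σ Q : T.ModelType, Fin m → Q) ∈ Kclass T m γ := by
  simp only [mem_Kclass_iff, hc, hd, true_and]
  exact forall₂_congr fun β hβ => not_congr (IH β hβ P ⟨c, hc⟩ ⟨d, hd⟩)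

theorem supported_ctype_of_ranksAgreeAt (IH : ∀ β < γ, RanksAgreeAt T n m β)
    {M : T.ModelType} {a : Fin n → M} {b : Fin m → M}
    (ha : Generates L a) (hb : Generates L b)
    (hMa : (⟨M, a⟩ : Σ Q : T.ModelType, Fin n → Q) ∈ Kclass T n γ)
    (hsupp : Supported (Kclass T n γ) (ctype (L := L) a)) :
    Supported (Kclass T m γ) (ctype (L := L) b) := by
  obtain ⟨φ, ⟨P₀, hP₀, hφP₀⟩, hφ⟩ := (supported_ctype_iff a).1 hsupp
  choose s hs using fun j => hb (a j)
  choose t ht using fun i => ha (b i)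
  have hsb : (fun j => (s j).realize b) = a := funext hs
  have htc : (fun i => (t i).realize a) = b := funext ht
  have hφa : φ.Realize a := (realize_iff_of_forall_realize_imp (hφ P₀ hP₀ hφP₀) φ).2 hφP₀
  refine (supported_ctype_iff b).2 ⟨φ.subst s ⊓ Formula.iInf fun i =>
    Term.equal (var i) ((t i).subst s), ⟨⟨M, b⟩, (mem_Kclass_iff_of_ranksAgreeAt IH ha hb).1 hMa,
    ?_⟩, ?_⟩
  · simp only [Formula.realize_inf, formula_realize_subst, hsb, hφa, Formula.realize_iInf,
      Formula.realize_equal, Term.realize_var, Term.realize_subst, true_and]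
    exact fun i => (ht i).symm
  · rintro ⟨P, c⟩ hPc hφc ψ hψ
    simp only [Formula.realize_inf, formula_realize_subst, Formula.realize_iInf,
      Formula.realize_equal, Term.realize_var, Term.realize_subst] at hφc
    obtain ⟨hφd, hcd⟩ := hφc
    set d : Fin n → P := fun j => (s j).realize c
    have hc : Generates L c := (mem_Kclass_iff.1 hPc).1
    have hPd := (mem_Kclass_iff_of_ranksAgreeAt IH (hc.of_terms t fun i => (hcd i).symm) hc).2 hPc
    have := forall_realize_imp_terms (hφ _ hPd hφd) t ψ (htc ▸ hψ)
    rwa [show (fun i => (t i).realize d) = c from (funext hcd).symm] at this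

theorem RankEq.of_ranksAgreeAt (IH : ∀ β < γ, RanksAgreeAt T n m β)
    {M : T.ModelType} {a : Fin n → M} (ha : Generates L a)
    (hm : ∃ b : Fin m → M, Generates L b) (h : RankEq T n γ M) : RankEq T m γ M := by
  obtain ⟨hγ, -, hsupp⟩ := rankEq_iff.1 h
  have hMa : (⟨M, a⟩ : Σ Q : T.ModelType, Fin n → Q) ∈ Kclass T n γ :=
    mem_Kclass_iff.2 ⟨ha, fun β hβ => not_rankEq_of_lt hβ h⟩
  exact rankEq_iff.2 ⟨hγ, hm, fun b hb =>
    supported_ctype_of_ranksAgreeAt IH ha hb hMa (hsupp a ha)⟩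

end Agreement

theorem ranksAgreeAt {T : L.Theory} (n m : ℕ) (γ : Ordinal) : RanksAgreeAt T n m γ := by
  induction γ using WellFoundedLT.induction with
  | _ γ IH =>
    rintro M ⟨a, ha⟩ ⟨b, hb⟩
    exact ⟨RankEq.of_ranksAgreeAt IH ha ⟨b, hb⟩,
      RankEq.of_ranksAgreeAt (fun β hβ => (IH β hβ).symm) hb ⟨a, ha⟩⟩

end Paper

theorem stmt_4_general (L : FirstOrder.Language.{0, 0}) (T : L.Theory)
    (n m : ℕ) (M : FirstOrder.Language.Theory.ModelType.{0, 0, 0} T)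
    (hn : ∃ a : Fin n → M, Paper.Generates L a)
    (hm : ∃ b : Fin m → M, Paper.Generates L b) :
    ∀ γ : Ordinal, Paper.RankEq T n γ M ↔ Paper.RankEq T m γ M :=
  fun γ => Paper.ranksAgreeAt n m γ M hn hm

/-- If `M` is both `n`-generated and `m`-generated then
`rk_n(M) = rk_m(M)` (in particular, one is `∞` iff the other is). -/
theorem stmt_4 (L : FirstOrder.Language.{0, 0}) [Countable L.Symbols] (T : L.Theory)
    (n m : ℕ) (M : FirstOrder.Language.Theory.ModelType.{0, 0, 0} T)
    (hn : ∃ a : Fin n → M, Paper.Generates L a)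
    (hm : ∃ b : Fin m → M, Paper.Generates L b) :
    ∀ γ : Ordinal, Paper.RankEq T n γ M ↔ Paper.RankEq T m γ M :=
  stmt_4_general L T n m M hn hm
end
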